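/- arXiv:2403.08450 — 2 statements merged into one kernel-verified Lean document; each statement's English description precedes it below -/
import Mathlib

section
/- Let f ∈ L¹(ℝ³) be supported in B(0,R), let k > 0 be fixed, and define H(θ,φ) = ∫_{ℝ³} e^{-ik x̂(θ,φ)·y} f(y) dy where x̂(θ,φ) = (cos θ cos φ, sin θ cos φ, sin φ). Let n₀ ∈ ℕ be such that (2k)^{n₀}/n₀! = sup_{n∈ℕ} (2k)ⁿ/n!. Then for every multi-index β ∈ ℕ₀² and all (θ,φ), |∂^β H(θ,φ)| ≤ M₂ · (2R)^{|β|} · β!, where M₂ = max{(2k)^{n₀}/n₀!, 1} · ‖f‖_{L¹(ℝ³)}. -/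
open MeasureTheory Real

/-- Partial derivative in the first (θ) variable. -/
noncomputable def pdTheta (H : ℝ → ℝ → ℂ) : ℝ → ℝ → ℂ :=
  fun θ φ => deriv (fun t => H t φ) θ

/-- Partial derivative in the second (φ) variable. -/
noncomputable def pdPhi (H : ℝ → ℝ → ℂ) : ℝ → ℝ → ℂ :=
  fun θ φ => deriv (fun t => H θ t) φ

/-!
Differentiating under the integral sign, `∂_θ^m ∂_φ^n` of the kernel `exp (-ik x̂·y)` is
`exp (-ik x̂·y)` times a sum of monomials in the factors `-ik ∂^α (x̂·y)`: each derivative either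
creates a new factor (from the exponential) or differentiates an existing one. Every factor has
modulus at most `k|y| ≤ kR`, and after `N = m + n` derivatives exactly `S(N, j)` of the monomials
have degree `j` (Stirling numbers of the second kind), so the derivative is bounded by
`∑ⱼ S(N, j) (kR)ʲ ‖f‖₁`. As `kʲ ≤ M j! / 2ʲ` and `R ≥ 1`, this is at most `M Rᴺ F_N(1/2) ‖f‖₁`,
where `F_N(x) = ∑ⱼ j! S(N, j) xʲ` is the Fubini polynomial. Splitting off the first block of an
ordered set partition gives `F_{N+1}(x) = x ∑ᵢ C(N+1, i+1) F_{N-i}(x)`, whence `F_N(1/2) ≤ N!`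
because `∑_{i ≥ 1} 1/i! = e - 1 < 2`. Finally `N! ≤ 2ᴺ m! n!`.
-/

open Finset Polynomial

local notation "ℝ³" => EuclideanSpace ℝ (Fin 3)

namespace Nat

theorem stirlingSecond_succ_succ_eq_sum_choose (n k : ℕ) :
    stirlingSecond (n + 1) (k + 1) =
      ∑ i ∈ range (n + 1), n.choose i * stirlingSecond (n - i) k := by
  induction n generalizing k with
  | zero => simp [stirlingSecond_succ_succ]
  | succ n ih =>
    have hsplit := sum_choose_succ_mul (R := ℕ) (fun _ j => stirlingSecond j k) n
    simp only [cast_id] at hsplit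
    rw [hsplit, ← ih]
    have hshift : ∀ i ∈ range (n + 1), n + 1 - i = n - i + 1 := fun i hi => by
      simp only [mem_range] at hi; omega
    rw [sum_congr rfl fun i hi => by rw [hshift i hi]]
    cases k with
    | zero => simp [stirlingSecond_succ_succ]
    | succ k =>
      simp only [stirlingSecond_succ_succ, mul_add, sum_add_distrib, mul_left_comm _ (k + 1),
        ← mul_sum, ← ih]
      ring

theorem succ_mul_stirlingSecond_succ_succ (n k : ℕ) :
    (k + 1) * stirlingSecond (n + 1) (k + 1) =
      ∑ i ∈ range (n + 1), (n + 1).choose (i + 1) * stirlingSecond (n - i) k := by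
  have h := stirlingSecond_succ_succ_eq_sum_choose (n + 1) k
  rw [sum_range_succ', stirlingSecond_succ_succ] at h
  simp only [choose_zero_right, one_mul, Nat.sub_zero, Nat.add_sub_add_right] at h
  omega

theorem factorial_add_le_two_pow_mul (m n : ℕ) :
    (m + n).factorial ≤ 2 ^ (m + n) * (m.factorial * n.factorial) := by
  rw [← add_choose_mul_factorial_mul_factorial, mul_assoc]
  exact Nat.mul_le_mul_right _ (choose_le_two_pow _ _)

end Nat

namespace FarField

noncomputable def fubiniPoly (N : ℕ) (x : ℝ) : ℝ :=
  ∑ j ∈ range (N + 1), (Nat.stirlingSecond N j * j.factorial : ℝ) * x ^ j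

theorem fubiniPoly_eq_sum_range {N B : ℕ} (h : N < B) (x : ℝ) :
    fubiniPoly N x = ∑ j ∈ range B, (Nat.stirlingSecond N j * j.factorial : ℝ) * x ^ j := by
  refine sum_subset (range_subset_range.2 h) fun j _ hj => ?_
  rw [Nat.stirlingSecond_eq_zero_of_lt (by simpa using hj)]
  simp

theorem fubiniPoly_succ (N : ℕ) (x : ℝ) :
    fubiniPoly (N + 1) x =
      x * ∑ i ∈ range (N + 1), ((N + 1).choose (i + 1) : ℝ) * fubiniPoly (N - i) x := by
  have hterm : ∀ j, (Nat.stirlingSecond (N + 1) (j + 1) * (j + 1).factorial : ℝ) * x ^ (j + 1) =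
      x * ∑ i ∈ range (N + 1), ((N + 1).choose (i + 1) : ℝ) *
        ((Nat.stirlingSecond (N - i) j * j.factorial : ℝ) * x ^ j) := by
    intro j
    have h := congrArg (Nat.cast : ℕ → ℝ) (Nat.succ_mul_stirlingSecond_succ_succ N j)
    push_cast at h
    calc (Nat.stirlingSecond (N + 1) (j + 1) * (j + 1).factorial : ℝ) * x ^ (j + 1)
        = x * (j.factorial * x ^ j) * ((j + 1) * Nat.stirlingSecond (N + 1) (j + 1)) := by
          push_cast [Nat.factorial_succ]; ring
      _ = _ := by
          rw [h, mul_sum, mul_sum]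
          exact sum_congr rfl fun i _ => by ring
  rw [fubiniPoly, sum_range_succ', Nat.stirlingSecond_succ_zero]
  simp only [hterm, ← mul_sum, CharP.cast_eq_zero, zero_mul, add_zero]
  rw [sum_comm]
  congr 1
  refine sum_congr rfl fun i hi => ?_
  rw [← mul_sum, fubiniPoly_eq_sum_range (B := N + 1) (by have := mem_range.1 hi; omega)]

theorem sum_range_inv_factorial_succ_le_two (n : ℕ) :
    ∑ i ∈ range n, ((i + 1).factorial : ℝ)⁻¹ ≤ 2 := by
  have h := Real.sum_le_exp_of_nonneg zero_le_one (n + 1)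
  rw [sum_range_succ'] at h
  simp only [one_pow, one_div, Nat.factorial_zero, Nat.cast_one, inv_one, pow_zero] at h
  linarith [Real.exp_one_lt_three]

theorem fubiniPoly_le_factorial {x : ℝ} (hx₀ : 0 ≤ x) (hx : x ≤ 1 / 2) (N : ℕ) :
    fubiniPoly N x ≤ N.factorial := by
  induction N using Nat.strong_induction_on with
  | _ N ih =>
  cases N with
  | zero => simp [fubiniPoly]
  | succ N =>
    have hterm : ∀ i ∈ range (N + 1), ((N + 1).choose (i + 1) : ℝ) * fubiniPoly (N - i) x ≤
        (N + 1).factorial * ((i + 1).factorial : ℝ)⁻¹ := by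
      intro i hi
      have hi : i ≤ N := Nat.lt_succ_iff.1 (mem_range.1 hi)
      have hfact : ((N + 1).choose (i + 1) : ℝ) * (N - i).factorial =
          (N + 1).factorial * ((i + 1).factorial : ℝ)⁻¹ := by
        rw [eq_mul_inv_iff_mul_eq₀ (by positivity), ← Nat.choose_mul_factorial_mul_factorial
          (show i + 1 ≤ N + 1 by omega), show N + 1 - (i + 1) = N - i by omega]
        push_cast; ring
      rw [← hfact]
      exact mul_le_mul_of_nonneg_left (ih _ (by omega)) (by positivity)
    calc fubiniPoly (N + 1) x
        ≤ x * ((N + 1).factorial * 2) := by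
          rw [fubiniPoly_succ]
          refine mul_le_mul_of_nonneg_left ((sum_le_sum hterm).trans ?_) hx₀
          rw [← mul_sum]
          exact mul_le_mul_of_nonneg_left (sum_range_inv_factorial_succ_le_two _) (by positivity)
      _ ≤ 1 / 2 * ((N + 1).factorial * 2) := mul_le_mul_of_nonneg_right hx (by positivity)
      _ = (N + 1).factorial := by ring

theorem sum_stirlingSecond_mul_pow_le {k R M : ℝ} (hR : 1 ≤ R)
    (hM : ∀ j : ℕ, (2 * k) ^ j ≤ M * j.factorial) (N : ℕ) :
    ∑ j ∈ range (N + 1), (Nat.stirlingSecond N j : ℝ) * (k * R) ^ j ≤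
      M * R ^ N * N.factorial := by
  have hM₀ : 0 ≤ M := zero_le_one.trans (by simpa using hM 0)
  calc ∑ j ∈ range (N + 1), (Nat.stirlingSecond N j : ℝ) * (k * R) ^ j
      ≤ ∑ j ∈ range (N + 1),
          M * R ^ N * ((Nat.stirlingSecond N j * j.factorial : ℝ) * (1 / 2) ^ j) := by
        refine sum_le_sum fun j hj => ?_
        have hkj : k ^ j ≤ M * j.factorial * (1 / 2) ^ j :=
          calc k ^ j = (2 * k) ^ j * (1 / 2) ^ j := by rw [← mul_pow]; ring_nf
            _ ≤ M * j.factorial * (1 / 2) ^ j := by gcongr; exact hM j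
        have hRj : R ^ j ≤ R ^ N := pow_le_pow_right₀ hR (by simpa [Nat.lt_succ_iff] using hj)
        calc (Nat.stirlingSecond N j : ℝ) * (k * R) ^ j
            = Nat.stirlingSecond N j * (k ^ j * R ^ j) := by rw [mul_pow]
          _ ≤ Nat.stirlingSecond N j * ((M * j.factorial * (1 / 2) ^ j) * R ^ N) := by gcongr
          _ = _ := by ring
    _ = M * R ^ N * fubiniPoly N (1 / 2) := by rw [fubiniPoly, mul_sum]
    _ ≤ M * R ^ N * N.factorial :=
        mul_le_mul_of_nonneg_left (fubiniPoly_le_factorial (by norm_num) le_rfl N) (by positivity)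

/- A list `L` of multi-indices stands for the monomial `∏_{α ∈ L} d α`, a list of such lists for
the sum of its monomials. When `∂ₑ (d α) = d (α + e)`, `deriveSystem e` computes the derivative of
`(∑ monomials) * exp (d 0)`: the factor `d e` comes from the exponential, and `bumpEach e`
differentiates one factor at a time. -/
def bumpEach (e : ℕ × ℕ) : List (ℕ × ℕ) → List (List (ℕ × ℕ))
  | [] => []
  | α :: L => ((α + e) :: L) :: (bumpEach e L).map (α :: ·)

def deriveSystem (e : ℕ × ℕ) (LL : List (List (ℕ × ℕ))) : List (List (ℕ × ℕ)) :=
  LL.flatMap fun L => (e :: L) :: bumpEach e L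

def systemValue (d : ℕ × ℕ → ℂ) (LL : List (List (ℕ × ℕ))) : ℂ :=
  (LL.map fun L => (L.map d).prod).sum

noncomputable def lengthPoly (LL : List (List (ℕ × ℕ))) : ℕ[X] :=
  (LL.map fun L => X ^ L.length).sum

theorem map_length_bumpEach (e : ℕ × ℕ) (L : List (ℕ × ℕ)) :
    (bumpEach e L).map List.length = List.replicate L.length L.length := by
  induction L with
  | nil => rfl
  | cons α L ih =>
    have h := congrArg (List.map (· + 1)) ih
    simp only [List.map_map, List.map_replicate, Function.comp_def] at h
    simp [bumpEach, List.map_map, Function.comp_def, h, List.replicate_succ]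

theorem lengthPoly_deriveSystem (e : ℕ × ℕ) (LL : List (List (ℕ × ℕ))) :
    lengthPoly (deriveSystem e LL) = X * (lengthPoly LL + derivative (lengthPoly LL)) := by
  induction LL with
  | nil => simp [lengthPoly, deriveSystem]
  | cons L LL ih =>
    have hbump : ((bumpEach e L).map fun L' => (X : ℕ[X]) ^ L'.length).sum =
        (L.length : ℕ[X]) * X ^ L.length := by
      have h := congrArg (fun l => (l.map fun n => (X : ℕ[X]) ^ n).sum) (map_length_bumpEach e L)
      simpa [List.map_map, Function.comp_def] using h
    have hstep : (X : ℕ[X]) * (X ^ L.length + derivative (X ^ L.length)) =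
        X ^ (L.length + 1) + (L.length : ℕ[X]) * X ^ L.length := by
      rw [derivative_X_pow]
      cases L.length with
      | zero => simp
      | succ n =>
        simp only [eq_natCast, Nat.cast_id, Nat.cast_add, Nat.cast_one, add_tsub_cancel_right]
        ring
    simp only [deriveSystem, lengthPoly, List.flatMap_cons, List.map_append, List.sum_append,
      List.map_cons, List.sum_cons, List.length_cons, hbump] at ih ⊢
    rw [ih, derivative_add, ← hstep]
    ring

theorem coeff_lengthPoly_deriveSystem {N : ℕ} {LL : List (List (ℕ × ℕ))}
    (h : ∀ j, (lengthPoly LL).coeff j = Nat.stirlingSecond N j) (e : ℕ × ℕ) (j : ℕ) :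
    (lengthPoly (deriveSystem e LL)).coeff j = Nat.stirlingSecond (N + 1) j := by
  rw [lengthPoly_deriveSystem]
  cases j with
  | zero => simp
  | succ j =>
    rw [coeff_X_mul, coeff_add, coeff_derivative, h, h, Nat.stirlingSecond_succ_succ]
    push_cast
    ring

theorem coeff_lengthPoly_iterate_deriveSystem {N : ℕ} {LL : List (List (ℕ × ℕ))}
    (h : ∀ j, (lengthPoly LL).coeff j = Nat.stirlingSecond N j) (e : ℕ × ℕ) (m j : ℕ) :
    (lengthPoly ((deriveSystem e)^[m] LL)).coeff j = Nat.stirlingSecond (N + m) j := by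
  induction m generalizing j with
  | zero => exact h j
  | succ m ih =>
    rw [Function.iterate_succ_apply', coeff_lengthPoly_deriveSystem ih, add_assoc]

theorem coeff_lengthPoly_iterate_iterate (e e' : ℕ × ℕ) (m n j : ℕ) :
    (lengthPoly ((deriveSystem e)^[m] ((deriveSystem e')^[n] [[]]))).coeff j =
      Nat.stirlingSecond (m + n) j := by
  have h₀ : ∀ j, (lengthPoly [[]]).coeff j = Nat.stirlingSecond 0 j := by
    intro j
    cases j <;> simp [lengthPoly, coeff_one]
  rw [coeff_lengthPoly_iterate_deriveSystem (coeff_lengthPoly_iterate_deriveSystem h₀ e' n),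
    zero_add, add_comm]

theorem aeval_lengthPoly {N : ℕ} {LL : List (List (ℕ × ℕ))}
    (h : ∀ j, (lengthPoly LL).coeff j = Nat.stirlingSecond N j) (x : ℝ) :
    aeval x (lengthPoly LL) = ∑ j ∈ range (N + 1), (Nat.stirlingSecond N j : ℝ) * x ^ j := by
  have hdeg : (lengthPoly LL).natDegree < N + 1 := by
    rw [Nat.lt_succ_iff, natDegree_le_iff_coeff_eq_zero]
    intro j hj
    rw [h, Nat.stirlingSecond_eq_zero_of_lt (by exact_mod_cast hj)]
  rw [aeval_eq_sum_range' hdeg]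
  simp [h, Algebra.smul_def]

theorem aeval_lengthPoly_eq_sum (x : ℝ) (LL : List (List (ℕ × ℕ))) :
    aeval x (lengthPoly LL) = (LL.map fun L => x ^ L.length).sum := by
  simp [lengthPoly, map_list_sum, List.map_map, Function.comp_def]

theorem systemValue_cons (d : ℕ × ℕ → ℂ) (L : List (ℕ × ℕ)) (LL : List (List (ℕ × ℕ))) :
    systemValue d (L :: LL) = (L.map d).prod + systemValue d LL := by
  simp [systemValue]

theorem systemValue_append (d : ℕ × ℕ → ℂ) (LL LL' : List (List (ℕ × ℕ))) :
    systemValue d (LL ++ LL') = systemValue d LL + systemValue d LL' := by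
  simp [systemValue]

theorem norm_systemValue_le {d : ℕ × ℕ → ℂ} {x : ℝ} (hd : ∀ α, ‖d α‖ ≤ x)
    (LL : List (List (ℕ × ℕ))) : ‖systemValue d LL‖ ≤ aeval x (lengthPoly LL) := by
  have hx : 0 ≤ x := (norm_nonneg _).trans (hd 0)
  have hprod : ∀ L : List (ℕ × ℕ), ‖(L.map d).prod‖ ≤ x ^ L.length := by
    intro L
    induction L with
    | nil => simp
    | cons α L ih =>
      rw [List.map_cons, List.prod_cons, norm_mul, List.length_cons, pow_succ']
      exact mul_le_mul (hd α) ih (norm_nonneg _) hx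
  rw [aeval_lengthPoly_eq_sum]
  induction LL with
  | nil => simp [systemValue]
  | cons L LL ih =>
    rw [systemValue_cons, List.map_cons, List.sum_cons]
    exact (norm_add_le _ _).trans (add_le_add (hprod L) ih)

section Derivative

variable {d : ℝ → ℕ × ℕ → ℂ} {e : ℕ × ℕ} {t : ℝ}

theorem hasDerivAt_list_prod_map (hd : ∀ α, HasDerivAt (d · α) (d t (α + e)) t)
    (L : List (ℕ × ℕ)) :
    HasDerivAt (fun s => (L.map (d s)).prod) (systemValue (d t) (bumpEach e L)) t := by
  induction L with
  | nil => simpa [bumpEach, systemValue] using hasDerivAt_const t (1 : ℂ)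
  | cons α L ih =>
    simp only [List.map_cons, List.prod_cons]
    refine ((hd α).fun_mul ih).congr_deriv ?_
    simp [bumpEach, systemValue, List.map_map, Function.comp_def, List.sum_map_mul_left]

theorem hasDerivAt_systemValue_mul_exp (hd : ∀ α, HasDerivAt (d · α) (d t (α + e)) t)
    (LL : List (List (ℕ × ℕ))) :
    HasDerivAt (fun s => systemValue (d s) LL * Complex.exp (d s 0))
      (systemValue (d t) (deriveSystem e LL) * Complex.exp (d t 0)) t := by
  have hexp : HasDerivAt (fun s => Complex.exp (d s 0)) (d t e * Complex.exp (d t 0)) t := by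
    simpa [mul_comm] using (hd 0).cexp
  induction LL with
  | nil => simpa [systemValue, deriveSystem] using hasDerivAt_const t (0 : ℂ)
  | cons L LL ih =>
    simp only [systemValue_cons, add_mul]
    refine (((hasDerivAt_list_prod_map hd L).fun_mul hexp).fun_add ih).congr_deriv ?_
    simp only [deriveSystem, List.flatMap_cons, systemValue_append, systemValue_cons,
      List.map_cons, List.prod_cons]
    ring

end Derivative

theorem continuous_systemValue_mul_exp {E : Type*} [TopologicalSpace E] {d : E → ℕ × ℕ → ℂ}
    (hd : ∀ α, Continuous (d · α)) (LL : List (List (ℕ × ℕ))) :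
    Continuous fun y => systemValue (d y) LL * Complex.exp (d y 0) := by
  refine Continuous.mul ?_ (Complex.continuous_exp.comp (hd 0))
  exact continuous_list_sum _ fun L _ => continuous_list_prod _ fun α _ => hd α

theorem hasDerivAt_integral_systemValue_mul_exp {E : Type*} [TopologicalSpace E]
    [MeasurableSpace E] [OpensMeasurableSpace E] {μ : Measure E} {f : E → ℂ}
    (hf : Integrable f μ) {d : ℝ → E → ℕ × ℕ → ℂ} {e : ℕ × ℕ} {C : List (List (ℕ × ℕ)) → ℝ}
    (hd : ∀ y α t, HasDerivAt (d · y α) (d t y (α + e)) t)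
    (hcont : ∀ t α, Continuous (d t · α))
    (hbound : ∀ LL t y, ‖systemValue (d t y) LL * Complex.exp (d t y 0) * f y‖ ≤ C LL * ‖f y‖)
    (LL : List (List (ℕ × ℕ))) (t : ℝ) :
    HasDerivAt (fun s => ∫ y, systemValue (d s y) LL * Complex.exp (d s y 0) * f y ∂μ)
      (∫ y, systemValue (d t y) (deriveSystem e LL) * Complex.exp (d t y 0) * f y ∂μ) t := by
  have hmeas : ∀ LL s, AEStronglyMeasurable
      (fun y => systemValue (d s y) LL * Complex.exp (d s y 0) * f y) μ := fun LL s =>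
    (continuous_systemValue_mul_exp (hcont s) LL).aestronglyMeasurable.mul hf.aestronglyMeasurable
  have hint : Integrable (fun y => systemValue (d t y) LL * Complex.exp (d t y 0) * f y) μ :=
    (hf.norm.const_mul (C LL)).mono' (hmeas LL t) (ae_of_all _ (hbound LL t))
  refine (hasDerivAt_integral_of_dominated_loc_of_deriv_le (Metric.ball_mem_nhds t one_pos)
    (Filter.Eventually.of_forall (hmeas LL)) hint (hmeas _ t)
    (ae_of_all _ fun y s _ => hbound (deriveSystem e LL) s y)
    (hf.norm.const_mul _) (ae_of_all _ fun y s _ => ?_)).2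
  exact (hasDerivAt_systemValue_mul_exp (fun α => hd y α s) LL).mul_const (f y)

/-- `∂_θ^{α.1} ∂_φ^{α.2} (x̂(θ, φ) · y)`, using `cos⁽ⁱ⁾ x = cos (x + i π/2)`. -/
noncomputable def phaseDeriv (y : ℝ³) (α : ℕ × ℕ) (θ φ : ℝ) : ℝ :=
  (y 0 * cos (θ + α.1 * (π / 2)) + y 1 * sin (θ + α.1 * (π / 2))) * cos (φ + α.2 * (π / 2)) +
    (if α.1 = 0 then y 2 else 0) * sin (φ + α.2 * (π / 2))

theorem hasDerivAt_cos_add_nat_mul_pi_div_two (i : ℕ) (x : ℝ) :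
    HasDerivAt (fun t => cos (t + i * (π / 2))) (cos (x + (i + 1 : ℕ) * (π / 2))) x := by
  have h : x + (i + 1 : ℕ) * (π / 2) = x + i * (π / 2) + π / 2 := by push_cast; ring
  rw [h, cos_add_pi_div_two]
  simpa using ((hasDerivAt_id x).add_const (i * (π / 2))).cos

theorem hasDerivAt_sin_add_nat_mul_pi_div_two (i : ℕ) (x : ℝ) :
    HasDerivAt (fun t => sin (t + i * (π / 2))) (sin (x + (i + 1 : ℕ) * (π / 2))) x := by
  have h : x + (i + 1 : ℕ) * (π / 2) = x + i * (π / 2) + π / 2 := by push_cast; ring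
  rw [h, sin_add_pi_div_two]
  simpa using ((hasDerivAt_id x).add_const (i * (π / 2))).sin

theorem hasDerivAt_phaseDeriv_fst (y : ℝ³) (α : ℕ × ℕ) (θ φ : ℝ) :
    HasDerivAt (phaseDeriv y α · φ) (phaseDeriv y (α + (1, 0)) θ φ) θ := by
  have h := ((((hasDerivAt_cos_add_nat_mul_pi_div_two α.1 θ).const_mul (y 0)).add
    ((hasDerivAt_sin_add_nat_mul_pi_div_two α.1 θ).const_mul (y 1))).mul_const
      (cos (φ + α.2 * (π / 2)))).add_const ((if α.1 = 0 then y 2 else 0) * sin (φ + α.2 * (π / 2)))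
  simpa [phaseDeriv] using h

theorem hasDerivAt_phaseDeriv_snd (y : ℝ³) (α : ℕ × ℕ) (θ φ : ℝ) :
    HasDerivAt (phaseDeriv y α θ ·) (phaseDeriv y (α + (0, 1)) θ φ) φ :=
  ((hasDerivAt_cos_add_nat_mul_pi_div_two α.2 φ).const_mul _).fun_add
    ((hasDerivAt_sin_add_nat_mul_pi_div_two α.2 φ).const_mul _)

theorem sq_mul_cos_add_mul_sin_le (a b x : ℝ) : (a * cos x + b * sin x) ^ 2 ≤ a ^ 2 + b ^ 2 := by
  nlinarith [sq_nonneg (a * sin x - b * cos x), sin_sq_add_cos_sq x]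

theorem abs_phaseDeriv_le (y : ℝ³) (α : ℕ × ℕ) (θ φ : ℝ) : |phaseDeriv y α θ φ| ≤ ‖y‖ := by
  refine abs_le_of_sq_le_sq ?_ (norm_nonneg y)
  have hc : (if α.1 = 0 then y 2 else 0) ^ 2 ≤ y 2 ^ 2 := by
    split_ifs <;> nlinarith [sq_nonneg (y 2)]
  rw [EuclideanSpace.real_norm_sq_eq, Fin.sum_univ_three]
  calc phaseDeriv y α θ φ ^ 2
      ≤ (y 0 * cos (θ + α.1 * (π / 2)) + y 1 * sin (θ + α.1 * (π / 2))) ^ 2 +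
          (if α.1 = 0 then y 2 else 0) ^ 2 :=
        sq_mul_cos_add_mul_sin_le _ _ _
    _ ≤ _ := by linarith [sq_mul_cos_add_mul_sin_le (y 0) (y 1) (θ + α.1 * (π / 2))]

theorem continuous_phaseDeriv (α : ℕ × ℕ) (θ φ : ℝ) : Continuous (phaseDeriv · α θ φ) := by
  unfold phaseDeriv
  split_ifs <;> fun_prop

theorem phaseDeriv_zero (y : ℝ³) (θ φ : ℝ) :
    phaseDeriv y 0 θ φ = cos θ * cos φ * y 0 + sin θ * cos φ * y 1 + sin φ * y 2 := by
  simp only [phaseDeriv, Prod.fst_zero, Prod.snd_zero, Nat.cast_zero, zero_mul, add_zero, if_true]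
  ring

noncomputable def phaseCoeff (k : ℝ) (y : ℝ³) (θ φ : ℝ) (α : ℕ × ℕ) : ℂ :=
  -Complex.I * k * phaseDeriv y α θ φ

theorem norm_exp_phaseCoeff (k : ℝ) (y : ℝ³) (θ φ : ℝ) (α : ℕ × ℕ) :
    ‖Complex.exp (phaseCoeff k y θ φ α)‖ = 1 := by
  simp [phaseCoeff, Complex.norm_exp]

theorem norm_phaseCoeff_le {k : ℝ} (hk : 0 ≤ k) (y : ℝ³) (θ φ : ℝ) (α : ℕ × ℕ) :
    ‖phaseCoeff k y θ φ α‖ ≤ k * ‖y‖ := by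
  simpa [phaseCoeff, abs_of_nonneg hk] using
    mul_le_mul_of_nonneg_left (abs_phaseDeriv_le y α θ φ) hk

theorem continuous_phaseCoeff (k θ φ : ℝ) (α : ℕ × ℕ) : Continuous (phaseCoeff k · θ φ α) :=
  continuous_const.mul (Complex.continuous_ofReal.comp (continuous_phaseDeriv α θ φ))

noncomputable def farFieldIntegral (k : ℝ) (f : ℝ³ → ℂ) (LL : List (List (ℕ × ℕ))) (θ φ : ℝ) : ℂ :=
  ∫ y, systemValue (phaseCoeff k y θ φ) LL * Complex.exp (phaseCoeff k y θ φ 0) * f y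

section

variable {R k : ℝ} {f : ℝ³ → ℂ}

theorem norm_systemValue_mul_exp_mul_le (hk : 0 ≤ k)
    (hsupp : ∀ x, x ∉ Metric.ball (0 : ℝ³) R → f x = 0)
    (LL : List (List (ℕ × ℕ))) (θ φ : ℝ) (y : ℝ³) :
    ‖systemValue (phaseCoeff k y θ φ) LL * Complex.exp (phaseCoeff k y θ φ 0) * f y‖ ≤
      aeval (k * R) (lengthPoly LL) * ‖f y‖ := by
  by_cases hfy : f y = 0
  · simp [hfy]
  have hy : ‖y‖ ≤ R := (mem_ball_zero_iff.1 (not_imp_comm.1 (hsupp y) hfy)).le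
  have hcoeff : ∀ α, ‖phaseCoeff k y θ φ α‖ ≤ k * R := fun α =>
    (norm_phaseCoeff_le hk y θ φ α).trans (mul_le_mul_of_nonneg_left hy hk)
  rw [norm_mul, norm_mul, norm_exp_phaseCoeff, mul_one]
  exact mul_le_mul_of_nonneg_right (norm_systemValue_le hcoeff LL) (norm_nonneg _)

theorem norm_farFieldIntegral_le (hk : 0 ≤ k) (hsupp : ∀ x, x ∉ Metric.ball (0 : ℝ³) R → f x = 0)
    (hf : Integrable f) (LL : List (List (ℕ × ℕ))) (θ φ : ℝ) :
    ‖farFieldIntegral k f LL θ φ‖ ≤ aeval (k * R) (lengthPoly LL) * ∫ y, ‖f y‖ := by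
  rw [farFieldIntegral, ← integral_const_mul]
  exact norm_integral_le_of_norm_le (hf.norm.const_mul _)
    (ae_of_all _ (norm_systemValue_mul_exp_mul_le hk hsupp LL θ φ))

theorem pdTheta_farFieldIntegral (hk : 0 ≤ k) (hsupp : ∀ x, x ∉ Metric.ball (0 : ℝ³) R → f x = 0)
    (hf : Integrable f) (LL : List (List (ℕ × ℕ))) :
    pdTheta (farFieldIntegral k f LL) = farFieldIntegral k f (deriveSystem (1, 0) LL) := by
  funext θ φ
  refine (hasDerivAt_integral_systemValue_mul_exp hf (d := fun t y => phaseCoeff k y t φ)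
    (fun y α t => ?_) (fun t α => continuous_phaseCoeff k t φ α)
    (fun LL t y => norm_systemValue_mul_exp_mul_le hk hsupp LL t φ y) LL θ).deriv
  exact (hasDerivAt_phaseDeriv_fst y α t φ).ofReal_comp.const_mul _

theorem pdPhi_farFieldIntegral (hk : 0 ≤ k) (hsupp : ∀ x, x ∉ Metric.ball (0 : ℝ³) R → f x = 0)
    (hf : Integrable f) (LL : List (List (ℕ × ℕ))) :
    pdPhi (farFieldIntegral k f LL) = farFieldIntegral k f (deriveSystem (0, 1) LL) := by
  funext θ φ
  refine (hasDerivAt_integral_systemValue_mul_exp hf (d := fun t y => phaseCoeff k y θ t)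
    (fun y α t => ?_) (fun t α => continuous_phaseCoeff k θ t α)
    (fun LL t y => norm_systemValue_mul_exp_mul_le hk hsupp LL θ t y) LL φ).deriv
  exact (hasDerivAt_phaseDeriv_snd y α θ t).ofReal_comp.const_mul _

end

theorem farFieldIntegral_nil (k : ℝ) (f : ℝ³ → ℂ) (θ φ : ℝ) :
    farFieldIntegral k f [[]] θ φ = ∫ y : ℝ³,
      Complex.exp (-Complex.I * (k : ℂ) *
        (((cos θ * cos φ) : ℝ) * (y 0 : ℂ) + ((sin θ * cos φ) : ℝ) * (y 1 : ℂ) +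
          ((sin φ : ℝ) : ℂ) * (y 2 : ℂ))) * f y := by
  refine integral_congr_ae (ae_of_all _ fun y => ?_)
  simp only [systemValue, phaseCoeff, phaseDeriv_zero, List.map_cons, List.map_nil, List.prod_nil,
    List.sum_cons, List.sum_nil, add_zero, one_mul]
  push_cast
  ring_nf

end FarField

open FarField in
/-- Derivative bounds for the far-field pattern in spherical angular coordinates:
`|∂^β H(θ,φ)| ≤ M₂ (2R)^{|β|} β!` with `M₂ = max{(2k)^{n₀}/n₀!, 1}·‖f‖_{L¹}`. -/
theorem angular_derivative_bounds (R k : ℝ) (hR : 1 ≤ R) (hk : 0 < k)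
    (f : EuclideanSpace ℝ (Fin 3) → ℂ)
    (hf : Integrable f (volume : Measure (EuclideanSpace ℝ (Fin 3))))
    (hsupp : ∀ x, x ∉ Metric.ball (0 : EuclideanSpace ℝ (Fin 3)) R → f x = 0)
    (n₀ : ℕ) (hn₀ : ∀ n : ℕ, (2 * k) ^ n / n.factorial ≤ (2 * k) ^ n₀ / n₀.factorial)
    (H : ℝ → ℝ → ℂ)
    (hH : ∀ θ φ : ℝ, H θ φ = ∫ y : EuclideanSpace ℝ (Fin 3),
        Complex.exp (-Complex.I * (k : ℂ) *
          (((Real.cos θ * Real.cos φ) : ℝ) * (y 0 : ℂ) +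
            ((Real.sin θ * Real.cos φ) : ℝ) * (y 1 : ℂ) +
            ((Real.sin φ : ℝ) : ℂ) * (y 2 : ℂ))) * f y) :
    ∀ β : ℕ × ℕ, ∀ θ φ : ℝ,
      ‖(pdTheta^[β.1] (pdPhi^[β.2] H)) θ φ‖ ≤
        (max ((2 * k) ^ n₀ / n₀.factorial) 1 *
            ∫ x : EuclideanSpace ℝ (Fin 3), ‖f x‖) *
          (2 * R) ^ (β.1 + β.2) * (β.1.factorial * β.2.factorial) := by
  rintro ⟨m, n⟩ θ φ
  set M := max ((2 * k) ^ n₀ / n₀.factorial) 1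
  have hM : ∀ j : ℕ, (2 * k) ^ j ≤ M * j.factorial := fun j =>
    (div_le_iff₀ (by positivity)).1 ((hn₀ j).trans (le_max_left _ _))
  have hM₀ : 0 ≤ M := zero_le_one.trans (le_max_right _ _)
  have hH' : H = farFieldIntegral k f [[]] := funext₂ fun θ φ => by
    rw [hH, farFieldIntegral_nil]
  rw [hH', ← (Function.Semiconj.iterate_right
      (fun LL => (pdPhi_farFieldIntegral hk.le hsupp hf LL).symm) n),
    ← (Function.Semiconj.iterate_right
      (fun LL => (pdTheta_farFieldIntegral hk.le hsupp hf LL).symm) m)]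
  calc _ ≤ aeval (k * R) (lengthPoly _) * ∫ y, ‖f y‖ :=
        norm_farFieldIntegral_le hk.le hsupp hf _ θ φ
    _ = (∑ j ∈ range (m + n + 1), (Nat.stirlingSecond (m + n) j : ℝ) * (k * R) ^ j) *
          ∫ y, ‖f y‖ := by
        rw [aeval_lengthPoly (coeff_lengthPoly_iterate_iterate _ _ m n)]
    _ ≤ M * R ^ (m + n) * (2 ^ (m + n) * (m.factorial * n.factorial)) * ∫ y, ‖f y‖ := by
        gcongr
        refine (sum_stirlingSecond_mul_pow_le hR hM _).trans ?_
        gcongr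
        exact_mod_cast Nat.factorial_add_le_two_pow_mul m n
    _ = _ := by rw [mul_pow]; ring
end

section
/- Let f ∈ L²(ℝ³) be supported in B(0,R), and suppose the far-field pattern u^∞(x̂,k) = ∫ e^{-i k x̂·y} f(y) dy vanishes for all x̂ in some nonempty open subset V of the unit sphere S² and for all k ∈ (0,K) with K > 1. Then f = 0 almost everywhere in ℝ³. -/
/-!
The far-field pattern is the Fourier transform of the source: `u^∞(x̂, k) = 𝓕 f (k x̂ / 2π)`,
so the data say that `𝓕 f` vanishes on an open cone. Since `f` has bounded support, the
restriction of `𝓕 f` to any real line extends to an entire function of one complex variable;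
joining a point of the cone to an arbitrary point by a line, the identity theorem gives
`𝓕 f = 0` everywhere. Testing `f` against `𝓕 (𝓕⁻ ψ)` for smooth compactly supported `ψ` and
moving `𝓕` onto `f` then shows `f = 0` almost everywhere.
-/

open MeasureTheory Real Complex FourierTransform Filter Topology
open scoped RealInnerProductSpace

theorem MeasureTheory.MemLp.integrable_of_support_subset {α F : Type*} [MeasurableSpace α]
    {μ : Measure α} [NormedAddCommGroup F] {f : α → F} {p : ENNReal} (hp : 1 ≤ p)
    (hf : MemLp f p μ) {s : Set α} (hs : Function.support f ⊆ s) (hμs : μ s ≠ ⊤) :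
    Integrable f μ := by
  have : IsFiniteMeasure (μ.restrict s) := ⟨by simpa using hμs.lt_top⟩
  exact (integrableOn_iff_integrable_of_support_subset hs).1 ((hf.restrict s).integrable hp)

theorem differentiable_integral_cexp_mul_smul {α E : Type*} [MeasurableSpace α] {μ : Measure α}
    [NormedAddCommGroup E] [NormedSpace ℂ E] {φ : α → ℂ} {g : α → E} {C : ℝ}
    (hφ : AEStronglyMeasurable φ μ) (hφC : ∀ a, g a ≠ 0 → ‖φ a‖ ≤ C) (hg : Integrable g μ) :
    Differentiable ℂ fun z : ℂ => ∫ a, cexp (z * φ a) • g a ∂μ := by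
  intro z₀
  have hexp : ∀ a, g a ≠ 0 → ∀ z : ℂ, ‖cexp (z * φ a)‖ ≤ Real.exp (‖z‖ * C) := fun a ha z =>
    (norm_exp_le_exp_norm _).trans (Real.exp_le_exp.2 (by
      rw [norm_mul]; exact mul_le_mul_of_nonneg_left (hφC a ha) (norm_nonneg _)))
  have hmeas : ∀ z : ℂ, AEStronglyMeasurable (fun a => cexp (z * φ a)) μ := fun z =>
    Complex.continuous_exp.comp_aestronglyMeasurable (hφ.const_mul z)
  have hint : Integrable (fun a => cexp (z₀ * φ a) • g a) μ := by
    refine (hg.norm.const_mul (Real.exp (‖z₀‖ * C))).mono' ((hmeas z₀).smul hg.1)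
      (Filter.Eventually.of_forall fun a => ?_)
    rcases eq_or_ne (g a) 0 with hga | hga
    · simp [hga]
    · rw [norm_smul]; gcongr; exact hexp a hga z₀
  have hbound : ∀ a, ∀ z ∈ Metric.ball z₀ 1,
      ‖(φ a * cexp (z * φ a)) • g a‖ ≤ C * Real.exp ((‖z₀‖ + 1) * C) * ‖g a‖ := by
    intro a z hz
    rcases eq_or_ne (g a) 0 with hga | hga
    · simp [hga]
    have hz' : ‖z‖ ≤ ‖z₀‖ + 1 := by
      have := norm_le_norm_add_norm_sub' z z₀
      rw [Metric.mem_ball, dist_eq_norm] at hz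
      linarith
    have hC : 0 ≤ C := (norm_nonneg _).trans (hφC a hga)
    rw [norm_smul, norm_mul]
    gcongr
    · exact hφC a hga
    · exact (hexp a hga z).trans (Real.exp_le_exp.2 (by gcongr))
  have hderiv : ∀ a, ∀ z : ℂ, HasDerivAt (fun z => cexp (z * φ a) • g a)
      ((φ a * cexp (z * φ a)) • g a) z := fun a z => by
    simpa [mul_comm] using ((hasDerivAt_mul_const (φ a)).cexp).smul_const (g a)
  exact (hasDerivAt_integral_of_dominated_loc_of_deriv_le (Metric.ball_mem_nhds z₀ one_pos)
    (.of_forall fun z => (hmeas z).smul hg.1) hint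
    (((hφ.mul (hmeas z₀))).smul hg.1) (.of_forall hbound) (hg.norm.const_mul _)
    (.of_forall fun a z _ => hderiv a z)).2.differentiableAt

section Fourier

variable {V E : Type*} [NormedAddCommGroup V] [InnerProductSpace ℝ V] [FiniteDimensional ℝ V]
  [MeasurableSpace V] [BorelSpace V] [NormedAddCommGroup E] [NormedSpace ℂ E] [CompleteSpace E]
  {f : V → E}

theorem analyticOnNhd_fourier_add_smul (hf : Integrable f)
    (hsupp : Bornology.IsBounded (Function.support f)) (w h : V) :
    AnalyticOnNhd ℝ (fun t : ℝ => 𝓕 f (w + t • h)) Set.univ := by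
  obtain ⟨r, hr⟩ := hsupp.subset_closedBall 0
  set φ : V → ℂ := fun v => -(2 * π * ⟪v, h⟫ * I)
  set g : V → E := fun v => 𝐞 (-⟪v, w⟫) • f v
  have hφ : ∀ v, g v ≠ 0 → ‖φ v‖ ≤ 2 * π * (r * ‖h‖) := by
    intro v hv
    have hvr : ‖v‖ ≤ r := by
      simpa using hr (Function.mem_support.2 fun h0 => hv (by simp [g, h0]))
    have hinner : |⟪v, h⟫| ≤ r * ‖h‖ :=
      (abs_real_inner_le_norm v h).trans (mul_le_mul_of_nonneg_right hvr (norm_nonneg h))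
    simp only [φ, norm_neg, norm_mul, Complex.norm_real, Complex.norm_ofNat, Complex.norm_I,
      mul_one, Real.norm_eq_abs, abs_of_pos pi_pos]
    gcongr
  have hG := differentiable_integral_cexp_mul_smul (μ := volume)
    (by fun_prop : Continuous φ).aestronglyMeasurable hφ
    ((Real.fourierIntegral_convergent_iff w).2 hf)
  intro t _
  have heq : (fun t : ℝ => 𝓕 f (w + t • h)) =
      (fun z : ℂ => ∫ v, cexp (z * φ v) • g v) ∘ Complex.ofRealCLM := by
    ext t
    simp only [Function.comp_apply, Real.fourier_eq, g]
    congr 1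
    ext v
    rw [Circle.smul_def, Circle.smul_def, smul_smul, Real.fourierChar_apply,
      Real.fourierChar_apply, ← Complex.exp_add, inner_add_right, inner_smul_right]
    congr 2
    simp only [φ, Complex.ofRealCLM_apply]
    push_cast
    ring
  rw [heq]
  exact (hG.analyticAt _).restrictScalars.comp (Complex.ofRealCLM.analyticAt t)

theorem fourier_eq_zero_of_eventuallyEq_zero (hf : Integrable f)
    (hsupp : Bornology.IsBounded (Function.support f)) {w₀ : V} (h : 𝓕 f =ᶠ[𝓝 w₀] 0) :
    𝓕 f = 0 := by
  ext w
  have hline : Tendsto (fun t : ℝ => w₀ + t • (w - w₀)) (𝓝 0) (𝓝 w₀) :=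
    (by fun_prop : Continuous fun t : ℝ => w₀ + t • (w - w₀)).tendsto' 0 w₀ (by simp)
  simpa using (analyticOnNhd_fourier_add_smul hf hsupp w₀ (w - w₀))
    |>.eqOn_zero_of_preconnected_of_eventuallyEq_zero isPreconnected_univ (Set.mem_univ 0)
      (hline.eventually h) (Set.mem_univ 1)

theorem ae_eq_zero_of_fourier_eq_zero (hf : Integrable f) (h : 𝓕 f = 0) : f =ᵐ[volume] 0 := by
  refine ae_eq_zero_of_integral_contDiff_smul_eq_zero hf.locallyIntegrable fun g hg hgc => ?_
  set ψ : SchwartzMap V ℂ := (hgc.comp_left Complex.ofReal_zero).toSchwartzMap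
    (Complex.ofRealCLM.contDiff.comp hg)
  calc ∫ x, g x • f x = ∫ x, 𝓕 (𝓕⁻ ψ) x • f x := by
        simp only [FourierInvPair.fourier_fourierInv_eq]
        exact integral_congr_ae (.of_forall fun x => RCLike.real_smul_eq_coe_smul (K := ℂ) _ _)
    _ = ∫ x, 𝓕⁻ ψ x • 𝓕 f x := by
      have := VectorFourier.integral_fourierIntegral_smul_eq_flip (L := innerₗ V)
        (μ := volume) (ν := volume) Real.continuous_fourierChar continuous_inner
        (𝓕⁻ ψ).integrable hf
      rwa [flip_innerₗ] at this
    _ = 0 := by simp [h]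

end Fourier

section FarField

variable {ι : Type*} [Fintype ι]

noncomputable def farField (f : EuclideanSpace ℝ ι → ℂ) (x : EuclideanSpace ℝ ι) (k : ℝ) : ℂ :=
  ∫ y, cexp (-I * k * ∑ i, (x i : ℂ) * (y i : ℂ)) * f y

theorem farField_eq_fourier (f : EuclideanSpace ℝ ι → ℂ) (x : EuclideanSpace ℝ ι) (k : ℝ) :
    farField f x k = 𝓕 f (((2 * π)⁻¹ * k) • x) := by
  rw [farField, Real.fourier_eq']
  congr 1 with y
  have hsum : ∑ i, (x i : ℂ) * (y i : ℂ) = ((⟪y, x⟫ : ℝ) : ℂ) := by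
    simp [PiLp.inner_apply]
  rw [hsum, smul_eq_mul, real_inner_smul_right]
  congr 2
  push_cast
  field_simp

theorem fourier_eq_farField (f : EuclideanSpace ℝ ι → ℂ) {w : EuclideanSpace ℝ ι} (hw : w ≠ 0) :
    𝓕 f w = farField f (‖w‖⁻¹ • w) (2 * π * ‖w‖) := by
  have hw' : ‖w‖ ≠ 0 := norm_ne_zero_iff.2 hw
  rw [farField_eq_fourier, smul_smul]
  field_simp
  rw [one_smul]

theorem fourier_eventuallyEq_zero_of_farField_eq_zero {f : EuclideanSpace ℝ ι → ℂ}
    {U : Set (EuclideanSpace ℝ ι)} (hU : IsOpen U) {K : ℝ}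
    (hvanish : ∀ x ∈ U ∩ Metric.sphere 0 1, ∀ k ∈ Set.Ioo 0 K, farField f x k = 0)
    {x₀ : EuclideanSpace ℝ ι} (hx₀ : x₀ ∈ U ∩ Metric.sphere 0 1) {k₀ : ℝ}
    (hk₀ : k₀ ∈ Set.Ioo 0 K) : 𝓕 f =ᶠ[𝓝 (((2 * π)⁻¹ * k₀) • x₀)] 0 := by
  set w₀ := ((2 * π)⁻¹ * k₀) • x₀
  have hnorm : ‖w₀‖ = (2 * π)⁻¹ * k₀ := by
    rw [norm_smul, mem_sphere_zero_iff_norm.1 hx₀.2, mul_one, Real.norm_of_nonneg]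
    exact mul_nonneg (by positivity) hk₀.1.le
  have hw₀ : ‖w₀‖ ≠ 0 := by rw [hnorm]; exact mul_ne_zero (by positivity) hk₀.1.ne'
  have hfreq : 2 * π * ‖w₀‖ = k₀ := by rw [hnorm]; field_simp
  have hdir : ‖w₀‖⁻¹ • w₀ = x₀ := by rw [smul_smul, ← hnorm, inv_mul_cancel₀ hw₀, one_smul]
  have hfreq_mem : ∀ᶠ w in 𝓝 w₀, 2 * π * ‖w‖ ∈ Set.Ioo 0 K :=
    (by fun_prop : Continuous fun w : EuclideanSpace ℝ ι => 2 * π * ‖w‖).continuousAt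
      |>.eventually_mem (isOpen_Ioo.mem_nhds (hfreq ▸ hk₀))
  have hdir_cont : ContinuousAt (fun w : EuclideanSpace ℝ ι => ‖w‖⁻¹ • w) w₀ :=
    (continuous_norm.continuousAt.inv₀ hw₀).smul continuousAt_id
  have hdir_mem : ∀ᶠ w in 𝓝 w₀, ‖w‖⁻¹ • w ∈ U :=
    hdir_cont.eventually_mem (hU.mem_nhds (hdir ▸ hx₀.1))
  filter_upwards [isOpen_ne.mem_nhds (norm_ne_zero_iff.1 hw₀), hfreq_mem, hdir_mem]
    with w hw hk hx
  rw [fourier_eq_farField f hw]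
  exact hvanish _ ⟨hx, by simp [norm_smul, norm_ne_zero_iff.2 hw]⟩ _ hk

end FarField

theorem uniqueness_limited_aperture_general (R K : ℝ) (hK : 1 < K)
    (f : EuclideanSpace ℝ (Fin 3) → ℂ)
    (hf : MemLp f 2 (volume : Measure (EuclideanSpace ℝ (Fin 3))))
    (hsupp : ∀ x, x ∉ Metric.ball (0 : EuclideanSpace ℝ (Fin 3)) R → f x = 0)
    (V : Set (EuclideanSpace ℝ (Fin 3)))
    (hVopen : ∃ U : Set (EuclideanSpace ℝ (Fin 3)), IsOpen U ∧
      V = U ∩ Metric.sphere (0 : EuclideanSpace ℝ (Fin 3)) 1)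
    (hVne : V.Nonempty)
    (hvanish : ∀ xhat ∈ V, ∀ k ∈ Set.Ioo (0 : ℝ) K,
      (∫ y : EuclideanSpace ℝ (Fin 3),
        Complex.exp (-Complex.I * (k : ℂ) * (∑ i, (xhat i : ℂ) * (y i : ℂ))) * f y) = 0) :
    f =ᵐ[(volume : Measure (EuclideanSpace ℝ (Fin 3)))] 0 := by
  obtain ⟨U, hU, rfl⟩ := hVopen
  obtain ⟨x₀, hx₀⟩ := hVne
  have hsupp' : Function.support f ⊆ Metric.ball 0 R := Function.support_subset_iff'.2 hsupp
  have hfi : Integrable f :=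
    hf.integrable_of_support_subset one_le_two hsupp' measure_ball_lt_top.ne
  have hcone : 𝓕 f =ᶠ[𝓝 (((2 * π)⁻¹ * 1) • x₀)] 0 :=
    fourier_eventuallyEq_zero_of_farField_eq_zero hU hvanish hx₀ ⟨one_pos, hK⟩
  exact ae_eq_zero_of_fourier_eq_zero hfi
    (fourier_eq_zero_of_eventuallyEq_zero hfi (Metric.isBounded_ball.subset hsupp') hcone)

/-- Uniqueness from limited-aperture multi-frequency far-field data: if the far-field
pattern of a compactly supported `L²` source vanishes on an open patch of directions
and for all wavenumbers in `(0,K)`, then the source vanishes. -/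
theorem uniqueness_limited_aperture (R K : ℝ) (hR : 1 ≤ R) (hK : 1 < K)
    (f : EuclideanSpace ℝ (Fin 3) → ℂ)
    (hf : MemLp f 2 (volume : Measure (EuclideanSpace ℝ (Fin 3))))
    (hsupp : ∀ x, x ∉ Metric.ball (0 : EuclideanSpace ℝ (Fin 3)) R → f x = 0)
    (V : Set (EuclideanSpace ℝ (Fin 3)))
    (hVopen : ∃ U : Set (EuclideanSpace ℝ (Fin 3)), IsOpen U ∧
      V = U ∩ Metric.sphere (0 : EuclideanSpace ℝ (Fin 3)) 1)
    (hVne : V.Nonempty)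
    (hvanish : ∀ xhat ∈ V, ∀ k ∈ Set.Ioo (0 : ℝ) K,
      (∫ y : EuclideanSpace ℝ (Fin 3),
        Complex.exp (-Complex.I * (k : ℂ) * (∑ i, (xhat i : ℂ) * (y i : ℂ))) * f y) = 0) :
    f =ᵐ[(volume : Measure (EuclideanSpace ℝ (Fin 3)))] 0 :=
  uniqueness_limited_aperture_general R K hK f hf hsupp V hVopen hVne hvanish
end
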